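/- For positive integers k ≥ 2 and n ≥ k, the sum over P(k,n) of 1/(l₁⋯l_k) equals (k/n) times the sum over m from k-1 to n-1 of the sum over P(k-1,m) of 1/(l₁⋯l_{k-1}). -/
import Mathlib


open Finset Polynomial

/-- The set of `k`-tuples of positive integers summing to `n`. -/
def P (k n : ℕ) : Finset (Fin k → ℕ) :=
  (Finset.Nat.antidiagonalTuple k n).filter fun l => ∀ i, 0 < l i

/-- `∑_{(l₁,…,l_k)∈P(k,n)} 1/(l₁⋯l_k)`. -/
def S (k n : ℕ) : ℚ := ∑ l ∈ P k n, (∏ i, (l i : ℚ))⁻¹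

/-- `e_l(1,2,…,m)` : the l-th elementary symmetric polynomial evaluated at 1,…,m. -/
def esym (m l : ℕ) : ℚ := (((Finset.range m).val.map fun i => ((i : ℚ) + 1)).esymm l)

lemma mem_P {k n : ℕ} {l : Fin k → ℕ} : l ∈ P k n ↔ (∑ i, l i = n) ∧ ∀ i, 0 < l i := by
  simp [P, Finset.Nat.mem_antidiagonalTuple]

lemma key (c n : ℕ) (i : Fin (c + 1)) (hn : c + 1 ≤ n) :
    ∑ l ∈ P (c + 1) n, (∏ j : Fin c, (l (i.succAbove j) : ℚ))⁻¹
      = ∑ m ∈ Finset.Icc c (n - 1), S c m := by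
  have hQ : ∑ m ∈ Finset.Icc c (n - 1), S c m
      = ∑ l' ∈ (Finset.Icc c (n - 1)).biUnion (P c), (∏ j, (l' j : ℚ))⁻¹ := by
    rw [Finset.sum_biUnion]
    · rfl
    · intro a _ b _ hab
      simp only [Finset.disjoint_left]
      intro l hla hlb
      exact hab ((mem_P.mp hla).1.symm.trans (mem_P.mp hlb).1)
  rw [hQ]
  apply Finset.sum_nbij' (fun l => l ∘ i.succAbove)
    (fun l' => i.insertNth (n - ∑ j, l' j) l')
  · -- forward membership
    intro l hl
    obtain ⟨hsum, hpos⟩ := mem_P.mp hl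
    rw [Finset.mem_biUnion]
    refine ⟨∑ j, l (i.succAbove j), ?_, ?_⟩
    · rw [Finset.mem_Icc]
      constructor
      · calc c = ∑ _j : Fin c, 1 := by simp
          _ ≤ ∑ j, l (i.succAbove j) :=
            Finset.sum_le_sum fun j _ => hpos _
      · have h : l i + ∑ j, l (i.succAbove j) = n := by
          rw [← hsum, Fin.sum_univ_succAbove _ i]
        have := hpos i
        omega
    · exact mem_P.mpr ⟨rfl, fun j => hpos _⟩
  · -- backward membership
    intro l' hl'
    rw [Finset.mem_biUnion] at hl'
    obtain ⟨m, hm, hl'⟩ := hl'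
    obtain ⟨hsum, hpos⟩ := mem_P.mp hl'
    rw [Finset.mem_Icc] at hm
    refine mem_P.mpr ⟨?_, ?_⟩
    · rw [Fin.sum_univ_succAbove _ i]
      simp only [Fin.insertNth_apply_same, Fin.insertNth_apply_succAbove]
      omega
    · intro j
      rcases eq_or_ne j i with rfl | hj
      · rw [Fin.insertNth_apply_same]; omega
      · obtain ⟨j', rfl⟩ := Fin.exists_succAbove_eq hj
        rw [Fin.insertNth_apply_succAbove]
        exact hpos j'
  · -- left inverse
    intro l hl
    obtain ⟨hsum, hpos⟩ := mem_P.mp hl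
    have h : (∑ j, (l ∘ i.succAbove) j) = n - l i := by
      have h2 : l i + ∑ j, l (i.succAbove j) = n := by
        rw [← hsum, Fin.sum_univ_succAbove _ i]
      simp only [Function.comp]; omega
    rw [h]
    have h3 : n - (n - l i) = l i := by
      have h2 : l i + ∑ j, l (i.succAbove j) = n := by
        rw [← hsum, Fin.sum_univ_succAbove _ i]
      omega
    rw [h3]
    exact Fin.insertNth_self_removeNth i l
  · -- right inverse
    intro l' _
    funext j
    exact Fin.insertNth_apply_succAbove i _ _ j
  · intro l _
    rfl

theorem stmt1 (k n : ℕ) (hk : 2 ≤ k) (hkn : k ≤ n) :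
    S k n = (k : ℚ) / n * ∑ m ∈ Finset.Icc (k - 1) (n - 1), S (k - 1) m := by
  obtain ⟨c, rfl⟩ : ∃ c, k = c + 1 := ⟨k - 1, by omega⟩
  have hn0 : (n : ℚ) ≠ 0 := by
    have : 0 < n := by omega
    exact_mod_cast this.ne'
  have main : (n : ℚ) * S (c + 1) n
      = ((c + 1 : ℕ) : ℚ) * ∑ m ∈ Finset.Icc c (n - 1), S c m := by
    have h1 : (n : ℚ) * S (c + 1) n
        = ∑ l ∈ P (c + 1) n, ∑ i, (l i : ℚ) * (∏ j, (l j : ℚ))⁻¹ := by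
      rw [S, Finset.mul_sum]
      apply Finset.sum_congr rfl
      intro l hl
      obtain ⟨hsum, _⟩ := mem_P.mp hl
      rw [← Finset.sum_mul]
      congr 1
      rw [← hsum]
      push_cast
      rfl
    rw [h1, Finset.sum_comm]
    have h2 : ∀ i : Fin (c + 1), ∑ l ∈ P (c + 1) n, (l i : ℚ) * (∏ j, (l j : ℚ))⁻¹
        = ∑ m ∈ Finset.Icc c (n - 1), S c m := by
      intro i
      rw [← key c n i (by omega)]
      apply Finset.sum_congr rfl
      intro l hl
      obtain ⟨_, hpos⟩ := mem_P.mp hl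
      have hne : (l i : ℚ) ≠ 0 := by exact_mod_cast (hpos i).ne'
      rw [Fin.prod_univ_succAbove (fun j => (l j : ℚ)) i, mul_inv, ← mul_assoc,
        mul_inv_cancel₀ hne, one_mul]
    rw [Finset.sum_congr rfl fun i _ => h2 i, Finset.sum_const, Finset.card_univ,
      Fintype.card_fin, nsmul_eq_mul]
  rw [div_mul_eq_mul_div, eq_div_iff hn0]
  show S (c + 1) n * (n : ℚ) = _
  rw [mul_comm]
  simpa using main
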